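/- There exists a constant C > 0 such that for all 0 ≤ s < t and x ∈ [0,1], ∫₀^s ∫₀¹ (G_{t−r}(x,ξ) − G_{s−r}(x,ξ))² dξ dr ≤ C |t−s|^{1/2}, where G is the Neumann heat kernel on (0,1). -/

import Mathlib

/-!
Expanding in the Neumann eigenfunctions `cos ((n + 1) π ξ)`, Parseval's identity turns the
`ξ`-integral into `∑ₙ 2 (e^{-λₙ (t - r)} - e^{-λₙ (s - r)})² cos² ((n + 1) π x)`, where
`λₙ = (n + 1)² π²`. Since `|e^{-λτ} - e^{-λσ}| ≤ e^{-λσ} min 1 (λ (τ - σ))`, integrating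
`e^{-2 λₙ (s - r)}` over `r ∈ (0, s)` leaves at most
`∑ₙ min 1 (λₙ δ)² / λₙ ≤ ∑ₙ min δ (1 / (n + 1)²)` with `δ = t - s`, and splitting this sum
at `n ≈ δ^{-1/2}` bounds it by `3 √δ`.
-/

open MeasureTheory Real Filter

/-- Neumann heat kernel on (0,1), via its eigenfunction expansion. -/
noncomputable def NeumannHeatKernel (t x y : ℝ) : ℝ :=
  1 + ∑' n : ℕ, 2 * Real.exp (-((n + 1 : ℝ) ^ 2) * Real.pi ^ 2 * t) *
      Real.cos ((n + 1 : ℝ) * Real.pi * x) * Real.cos ((n + 1 : ℝ) * Real.pi * y)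

theorem ENNReal.ofReal_tsum_le_tsum_ofReal {f : ℕ → ℝ} (hf : ∀ n, 0 ≤ f n) :
    ENNReal.ofReal (∑' n, f n) ≤ ∑' n, ENNReal.ofReal (f n) := by
  by_cases hs : Summable f
  · exact (ENNReal.ofReal_tsum_of_nonneg hf hs).le
  · simp [tsum_eq_zero_of_not_summable hs]

section

variable {α : Type*} [MeasurableSpace α] {μ : Measure α}

theorem integral_sq_sum_of_orthogonal [IsFiniteMeasure μ] {φ : ℕ → α → ℝ} {c : ℝ}
    (hφ : ∀ n, AEStronglyMeasurable (φ n) μ) (hφ_le : ∀ n x, |φ n x| ≤ 1)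
    (horth : ∀ n m, ∫ x, φ n x * φ m x ∂μ = if n = m then c else 0) (a : ℕ → ℝ) (s : Finset ℕ) :
    ∫ x, (∑ n ∈ s, a n * φ n x) ^ 2 ∂μ = c * ∑ n ∈ s, a n ^ 2 := by
  have hint : ∀ n m, Integrable (fun x => a n * a m * (φ n x * φ m x)) μ := fun n m =>
    (Integrable.of_bound ((hφ n).mul (hφ m)) 1 (ae_of_all _ fun x => by
      rw [Pi.mul_apply, Real.norm_eq_abs, abs_mul]
      exact mul_le_one₀ (hφ_le n x) (abs_nonneg _) (hφ_le m x))).const_mul _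
  have hexpand : ∀ x, (∑ n ∈ s, a n * φ n x) ^ 2
      = ∑ n ∈ s, ∑ m ∈ s, a n * a m * (φ n x * φ m x) := fun x => by
    rw [sq, Finset.sum_mul_sum]
    exact Finset.sum_congr rfl fun n _ => Finset.sum_congr rfl fun m _ => by ring
  simp_rw [hexpand]
  rw [integral_finsetSum _ fun n _ => integrable_finsetSum _ fun m _ => hint n m, Finset.mul_sum]
  refine Finset.sum_congr rfl fun n hn => ?_
  rw [integral_finsetSum _ fun m _ => hint n m]
  simp_rw [integral_const_mul, horth, mul_ite, mul_zero, Finset.sum_ite_eq, if_pos hn]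
  ring

theorem integral_sq_tsum_of_orthogonal [IsFiniteMeasure μ] {φ : ℕ → α → ℝ} {c : ℝ}
    (hφ : ∀ n, AEStronglyMeasurable (φ n) μ) (hφ_le : ∀ n x, |φ n x| ≤ 1)
    (horth : ∀ n m, ∫ x, φ n x * φ m x ∂μ = if n = m then c else 0) {a : ℕ → ℝ}
    (ha : Summable a) :
    ∫ x, (∑' n, a n * φ n x) ^ 2 ∂μ = c * ∑' n, a n ^ 2 := by
  have hsq : Summable fun n => a n ^ 2 :=
    (ha.abs.mul_left (∑' n, |a n|)).of_nonneg_of_le (fun n => sq_nonneg _) fun n => by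
      rw [← sq_abs, sq]
      exact mul_le_mul_of_nonneg_right (ha.abs.le_tsum n fun _ _ => abs_nonneg _) (abs_nonneg _)
  have hterm : ∀ x n, |a n * φ n x| ≤ |a n| := fun x n => by
    rw [abs_mul]; exact mul_le_of_le_one_right (abs_nonneg _) (hφ_le n x)
  have hbound : ∀ N x, ‖(∑ n ∈ Finset.range N, a n * φ n x) ^ 2‖ ≤ (∑' n, |a n|) ^ 2 := by
    intro N x
    rw [norm_pow, Real.norm_eq_abs]
    refine pow_le_pow_left₀ (abs_nonneg _) ?_ 2
    calc |∑ n ∈ Finset.range N, a n * φ n x|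
        ≤ ∑ n ∈ Finset.range N, |a n| :=
          (Finset.abs_sum_le_sum_abs _ _).trans (Finset.sum_le_sum fun n _ => hterm x n)
      _ ≤ ∑' n, |a n| := ha.abs.sum_le_tsum _ fun _ _ => abs_nonneg _
  refine tendsto_nhds_unique (l := atTop)
    (f := fun N => ∫ x, (∑ n ∈ Finset.range N, a n * φ n x) ^ 2 ∂μ) ?_ ?_
  · refine tendsto_integral_filter_of_norm_le_const
      (Eventually.of_forall fun N => ?_) ⟨_, Eventually.of_forall fun N => ae_of_all _ (hbound N)⟩
      (ae_of_all _ fun x => ?_)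
    · exact (Finset.aestronglyMeasurable_fun_sum _ fun n _ => (hφ n).const_mul (a n)).pow 2
    · exact ((ha.abs.of_norm_bounded (hterm x)).hasSum.tendsto_sum_nat).pow 2
  · simp_rw [integral_sq_sum_of_orthogonal hφ hφ_le horth]
    exact hsq.hasSum.tendsto_sum_nat.const_mul c

theorem integral_le_tsum_integral_of_abs_le_tsum {f : α → ℝ} {g : ℕ → α → ℝ}
    (hg_int : ∀ n, Integrable (g n) μ) (hg_nonneg : ∀ n a, 0 ≤ g n a)
    (hg_sum : Summable fun n => ∫ a, g n a ∂μ) (hfg : ∀ᵐ a ∂μ, |f a| ≤ ∑' n, g n a) :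
    ∫ a, f a ∂μ ≤ ∑' n, ∫ a, g n a ∂μ := by
  have hlint : ∫⁻ a, ENNReal.ofReal ‖f a‖ ∂μ ≤ ENNReal.ofReal (∑' n, ∫ a, g n a ∂μ) :=
    calc ∫⁻ a, ENNReal.ofReal ‖f a‖ ∂μ
        ≤ ∫⁻ a, ∑' n, ENNReal.ofReal (g n a) ∂μ := lintegral_mono_ae <| hfg.mono fun a ha =>
          (ENNReal.ofReal_le_ofReal ha).trans (ENNReal.ofReal_tsum_le_tsum_ofReal (hg_nonneg · a))
      _ = ∑' n, ∫⁻ a, ENNReal.ofReal (g n a) ∂μ :=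
          lintegral_tsum fun n => (hg_int n).aemeasurable.ennreal_ofReal
      _ = ∑' n, ENNReal.ofReal (∫ a, g n a ∂μ) := by
          congr with n
          rw [ofReal_integral_eq_lintegral_ofReal (hg_int n) (ae_of_all _ (hg_nonneg n))]
      _ = ENNReal.ofReal (∑' n, ∫ a, g n a ∂μ) :=
          (ENNReal.ofReal_tsum_of_nonneg (fun n => integral_nonneg (hg_nonneg n)) hg_sum).symm
  calc ∫ a, f a ∂μ ≤ ‖∫ a, f a ∂μ‖ := Real.le_norm_self _
    _ ≤ (∫⁻ a, ENNReal.ofReal ‖f a‖ ∂μ).toReal := norm_integral_le_lintegral_norm f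
    _ ≤ ∑' n, ∫ a, g n a ∂μ :=
        ENNReal.toReal_le_of_le_ofReal (tsum_nonneg fun n => integral_nonneg (hg_nonneg n)) hlint

end

theorem integral_cos_int_mul_pi (k : ℤ) :
    ∫ ξ in (0:ℝ)..1, cos (k * π * ξ) = if k = 0 then 1 else 0 := by
  split_ifs with hk
  · simp [hk]
  · have hkπ : (k : ℝ) * π ≠ 0 := mul_ne_zero (Int.cast_ne_zero.mpr hk) pi_ne_zero
    rw [intervalIntegral.integral_comp_mul_left (fun ξ => cos ξ) hkπ, integral_cos]
    simp [sin_int_mul_pi]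

theorem integral_cos_succ_mul_cos_succ (n m : ℕ) :
    ∫ ξ in (0:ℝ)..1, cos ((n + 1) * π * ξ) * cos ((m + 1) * π * ξ) =
      if n = m then 1 / 2 else 0 := by
  have hprod : ∀ ξ : ℝ, cos ((n + 1) * π * ξ) * cos ((m + 1) * π * ξ) =
      (cos (((n - m : ℤ) : ℝ) * π * ξ) + cos (((n + m + 2 : ℤ) : ℝ) * π * ξ)) / 2 := fun ξ => by
    push_cast
    rw [show ((n : ℝ) - m) * π * ξ = (n + 1) * π * ξ - (m + 1) * π * ξ by ring,
      show ((n : ℝ) + m + 2) * π * ξ = (n + 1) * π * ξ + (m + 1) * π * ξ by ring, cos_sub, cos_add]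
    ring
  have hcont : ∀ k : ℤ, Continuous fun ξ : ℝ => cos (k * π * ξ) := fun k => by fun_prop
  simp_rw [hprod]
  rw [intervalIntegral.integral_div,
    intervalIntegral.integral_add ((hcont _).intervalIntegrable _ _)
      ((hcont _).intervalIntegrable _ _), integral_cos_int_mul_pi, integral_cos_int_mul_pi,
    if_neg (show (n + m + 2 : ℤ) ≠ 0 by omega)]
  by_cases h : n = m
  · simp [h]
  · rw [if_neg (show (n - m : ℤ) ≠ 0 by omega), if_neg h]; norm_num

theorem integral_sq_tsum_cos {a : ℕ → ℝ} (ha : Summable a) :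
    ∫ ξ in (0:ℝ)..1, (∑' n, a n * cos ((n + 1) * π * ξ)) ^ 2 = (∑' n, a n ^ 2) / 2 := by
  rw [intervalIntegral.integral_of_le zero_le_one,
    integral_sq_tsum_of_orthogonal (φ := fun n ξ => cos ((n + 1) * π * ξ)) (c := 1 / 2)
      (fun n => (by fun_prop : Continuous _).aestronglyMeasurable) (fun n ξ => abs_cos_le_one _)
      (fun n m => by
        rw [← intervalIntegral.integral_of_le zero_le_one, integral_cos_succ_mul_cos_succ]) ha]
  ring

theorem integral_exp_neg_mul_sub {c : ℝ} (hc : c ≠ 0) (s : ℝ) :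
    ∫ r in (0:ℝ)..s, exp (-(c * (s - r))) = (1 - exp (-(c * s))) / c := by
  rw [intervalIntegral.integral_comp_sub_left (fun u => exp (-(c * u))), sub_self, sub_zero]
  simp_rw [← neg_mul]
  rw [intervalIntegral.integral_comp_mul_left (fun u => exp u) (neg_ne_zero.2 hc), integral_exp]
  simp only [smul_eq_mul, mul_zero, exp_zero, neg_mul]
  field_simp
  ring

theorem min_one_mul_sq_div_le {l δ : ℝ} (hl : 0 < l) (hδ : 0 ≤ δ) :
    min 1 (l * δ) ^ 2 / l ≤ min δ (1 / l) := by
  have h0 : 0 ≤ min 1 (l * δ) := le_min zero_le_one (mul_nonneg hl.le hδ)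
  have hsq : min 1 (l * δ) ^ 2 ≤ min 1 (l * δ) := by
    rw [sq]; exact mul_le_of_le_one_left h0 (min_le_left _ _)
  refine le_min ?_ (div_le_div_of_nonneg_right (hsq.trans (min_le_left _ _)) hl.le)
  rw [div_le_iff₀ hl]
  exact hsq.trans ((min_le_right _ _).trans_eq (mul_comm _ _))

theorem summable_one_div_succ_sq : Summable fun n : ℕ => 1 / ((n : ℝ) + 1) ^ 2 := by
  simpa using (summable_nat_add_iff 1).2
    (summable_one_div_nat_pow.2 one_lt_two : Summable fun n : ℕ => 1 / (n : ℝ) ^ 2)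

theorem summable_min_one_div_succ_sq {δ : ℝ} (hδ : 0 ≤ δ) :
    Summable fun n : ℕ => min δ (1 / ((n : ℝ) + 1) ^ 2) :=
  summable_one_div_succ_sq.of_nonneg_of_le (fun n => le_min hδ (by positivity))
    fun n => min_le_right _ _

theorem sum_range_one_div_add_succ_sq_le (N M : ℕ) :
    ∑ k ∈ Finset.range M, 1 / (((N + k : ℕ) : ℝ) + 1) ^ 2 ≤ 2 / ((N : ℝ) + 1) := by
  have h := Finset.sum_Ico_eq_sum_range (fun i : ℕ => ((i : ℝ) ^ 2)⁻¹) (N + 1) (N + 1 + M)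
  rw [Finset.Ico_add_one_left_eq_Ioo, Nat.add_sub_cancel_left] at h
  refine le_of_eq_of_le ?_ ((h.symm.trans_le (sum_Ioo_inv_sq_le N (N + 1 + M))))
  refine Finset.sum_congr rfl fun k _ => ?_
  push_cast; ring

theorem tsum_min_one_div_succ_sq_le {δ : ℝ} (hδ : 0 < δ) :
    ∑' n : ℕ, min δ (1 / ((n : ℝ) + 1) ^ 2) ≤ 3 * √δ := by
  set N := ⌊1 / √δ⌋₊
  have hsqrt : 0 < √δ := sqrt_pos.2 hδ
  have hhead : (N : ℝ) * δ ≤ √δ :=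
    calc (N : ℝ) * δ ≤ 1 / √δ * δ := mul_le_mul_of_nonneg_right (Nat.floor_le (by positivity)) hδ.le
      _ = √δ := by rw [one_div_mul_eq_div, div_sqrt]
  have htail : 2 / ((N : ℝ) + 1) ≤ 2 * √δ := by
    have h := Nat.lt_floor_add_one (1 / √δ)
    rw [div_lt_iff₀ hsqrt] at h
    rw [div_le_iff₀ (by positivity)]
    nlinarith
  refine (summable_min_one_div_succ_sq hδ.le).tsum_le_of_sum_range_le fun M => ?_
  calc ∑ n ∈ Finset.range M, min δ (1 / ((n : ℝ) + 1) ^ 2)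
      ≤ ∑ n ∈ Finset.range (N + M), min δ (1 / ((n : ℝ) + 1) ^ 2) :=
        Finset.sum_le_sum_of_subset_of_nonneg (Finset.range_mono (by omega))
          fun n _ _ => le_min hδ.le (by positivity)
    _ ≤ ∑ n ∈ Finset.range N, δ + ∑ k ∈ Finset.range M, 1 / (((N + k : ℕ) : ℝ) + 1) ^ 2 := by
        rw [Finset.sum_range_add]
        exact add_le_add (Finset.sum_le_sum fun n _ => min_le_left _ _)
          (Finset.sum_le_sum fun k _ => min_le_right _ _)
    _ ≤ 3 * √δ := by
        rw [Finset.sum_const, Finset.card_range, nsmul_eq_mul]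
        linarith [sum_range_one_div_add_succ_sq_le N M]

noncomputable def neumannEigenvalue (n : ℕ) : ℝ := ((n : ℝ) + 1) ^ 2 * π ^ 2

theorem sq_succ_le_neumannEigenvalue (n : ℕ) : ((n : ℝ) + 1) ^ 2 ≤ neumannEigenvalue n :=
  le_mul_of_one_le_right (sq_nonneg _) (one_le_pow₀ (by linarith [pi_gt_three]))

theorem neumannEigenvalue_pos (n : ℕ) : 0 < neumannEigenvalue n :=
  (by positivity : (0 : ℝ) < ((n : ℝ) + 1) ^ 2).trans_le (sq_succ_le_neumannEigenvalue n)

theorem summable_exp_neg_neumannEigenvalue_mul {σ : ℝ} (hσ : 0 < σ) :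
    Summable fun n => exp (-(neumannEigenvalue n * σ)) := by
  refine (summable_exp_nat_mul_of_ge (c := -(π ^ 2 * σ)) (f := fun n => ((n : ℝ) + 1) ^ 2)
    (neg_neg_of_pos (by positivity)) fun n => by nlinarith).congr fun n => ?_
  rw [neumannEigenvalue]; ring_nf

theorem summable_neumannHeatKernel_term {t : ℝ} (ht : 0 < t) (x y : ℝ) :
    Summable fun n : ℕ => 2 * exp (-(neumannEigenvalue n * t)) * cos ((n + 1) * π * x) *
      cos ((n + 1) * π * y) :=
  ((summable_exp_neg_neumannEigenvalue_mul ht).mul_left 2).of_norm_bounded fun n => by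
    rw [norm_mul, norm_mul, mul_assoc, Real.norm_of_nonneg (by positivity : (0 : ℝ) ≤ 2 * exp _)]
    exact mul_le_of_le_one_right (by positivity)
      (mul_le_one₀ (abs_cos_le_one _) (norm_nonneg _) (abs_cos_le_one _))

theorem neumannHeatKernel_eq (t x y : ℝ) :
    NeumannHeatKernel t x y = 1 + ∑' n : ℕ, 2 * exp (-(neumannEigenvalue n * t)) *
      cos ((n + 1) * π * x) * cos ((n + 1) * π * y) := by
  simp only [NeumannHeatKernel, neumannEigenvalue, neg_mul, mul_assoc]

theorem neumannHeatKernel_sub {σ τ : ℝ} (hσ : 0 < σ) (hτ : 0 < τ) (x ξ : ℝ) :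
    NeumannHeatKernel τ x ξ - NeumannHeatKernel σ x ξ =
      ∑' n : ℕ, 2 * (exp (-(neumannEigenvalue n * τ)) - exp (-(neumannEigenvalue n * σ))) *
        cos ((n + 1) * π * x) * cos ((n + 1) * π * ξ) := by
  rw [neumannHeatKernel_eq, neumannHeatKernel_eq, add_sub_add_left_eq_sub,
    ← (summable_neumannHeatKernel_term hτ x ξ).tsum_sub (summable_neumannHeatKernel_term hσ x ξ)]
  congr with n
  ring

theorem abs_exp_neg_mul_sub_exp_neg_mul_le {l σ τ : ℝ} (hl : 0 ≤ l) (hστ : σ ≤ τ) :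
    |exp (-(l * τ)) - exp (-(l * σ))| ≤ exp (-(l * σ)) * min 1 (l * (τ - σ)) := by
  have hu : 0 ≤ l * (τ - σ) := mul_nonneg hl (sub_nonneg.2 hστ)
  have hfactor : exp (-(l * τ)) - exp (-(l * σ)) =
      -(exp (-(l * σ)) * (1 - exp (-(l * (τ - σ))))) := by
    rw [show -(l * τ) = -(l * σ) + -(l * (τ - σ)) by ring, exp_add]; ring
  have h1 : 0 ≤ 1 - exp (-(l * (τ - σ))) := by simp [hu]
  rw [hfactor, abs_neg, abs_of_nonneg (mul_nonneg (exp_pos _).le h1)]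
  refine mul_le_mul_of_nonneg_left (le_min ?_ ?_) (exp_pos _).le
  · linarith [exp_pos (-(l * (τ - σ)))]
  · linarith [add_one_le_exp (-(l * (τ - σ)))]

theorem integral_sq_neumannHeatKernel_sub_le {σ τ : ℝ} (hσ : 0 < σ) (hστ : σ ≤ τ) (x : ℝ) :
    ∫ ξ in (0:ℝ)..1, (NeumannHeatKernel τ x ξ - NeumannHeatKernel σ x ξ) ^ 2 ≤
      ∑' n, 2 * min 1 (neumannEigenvalue n * (τ - σ)) ^ 2 *
        exp (-(2 * neumannEigenvalue n * σ)) := by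
  set L := neumannEigenvalue
  set m : ℕ → ℝ := fun n => min 1 (L n * (τ - σ))
  set a : ℕ → ℝ := fun n => 2 * (exp (-(L n * τ)) - exp (-(L n * σ))) * cos ((n + 1) * π * x)
  have hm : ∀ n, 0 ≤ m n ∧ m n ≤ 1 := fun n =>
    ⟨le_min zero_le_one (mul_nonneg (neumannEigenvalue_pos n).le (sub_nonneg.2 hστ)),
      min_le_left _ _⟩
  have ha : ∀ n, |a n| ≤ 2 * (exp (-(L n * σ)) * m n) := fun n => by
    rw [abs_mul, abs_mul, abs_two, mul_assoc]
    refine mul_le_mul_of_nonneg_left ?_ zero_le_two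
    exact (mul_le_of_le_one_right (abs_nonneg _) (abs_cos_le_one _)).trans
      (abs_exp_neg_mul_sub_exp_neg_mul_le (neumannEigenvalue_pos n).le hστ)
  have ha_summable : Summable a :=
    ((summable_exp_neg_neumannEigenvalue_mul hσ).mul_left 2).of_norm_bounded fun n =>
      (ha n).trans (mul_le_mul_of_nonneg_left (mul_le_of_le_one_right (exp_pos _).le (hm n).2)
        zero_le_two)
  have hexp : ∀ n, exp (-(2 * L n * σ)) = exp (-(L n * σ)) ^ 2 := fun n => by
    rw [sq, ← exp_add]; ring_nf
  have hpt : ∀ n, a n ^ 2 / 2 ≤ 2 * m n ^ 2 * exp (-(2 * L n * σ)) := fun n => by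
    have hsq := pow_le_pow_left₀ (abs_nonneg _) (ha n) 2
    rw [sq_abs] at hsq
    rw [hexp]
    linarith
  have hrhs : Summable fun n => 2 * m n ^ 2 * exp (-(2 * L n * σ)) :=
    ((summable_exp_neg_neumannEigenvalue_mul (by positivity : 0 < 2 * σ)).mul_left 2
      ).of_nonneg_of_le (fun n => by positivity) fun n => by
        rw [show -(2 * L n * σ) = -(L n * (2 * σ)) by ring, mul_assoc]
        exact mul_le_mul_of_nonneg_left
          (mul_le_of_le_one_left (exp_pos _).le (pow_le_one₀ (hm n).1 (hm n).2)) zero_le_two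
  rw [intervalIntegral.integral_congr fun ξ _ => by
      rw [neumannHeatKernel_sub hσ (hσ.trans_le hστ)],
    integral_sq_tsum_cos ha_summable, ← tsum_div_const]
  exact Summable.tsum_le_tsum hpt (hrhs.of_nonneg_of_le (fun n => by positivity) hpt) hrhs

theorem integral_integral_sq_neumannHeatKernel_sub_le {s t : ℝ} (hs : 0 ≤ s) (hst : s ≤ t)
    (x : ℝ) :
    ∫ r in (0:ℝ)..s, ∫ ξ in (0:ℝ)..1,
        (NeumannHeatKernel (t - r) x ξ - NeumannHeatKernel (s - r) x ξ) ^ 2 ≤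
      ∑' n : ℕ, min (t - s) (1 / ((n : ℝ) + 1) ^ 2) := by
  set L := neumannEigenvalue
  set m : ℕ → ℝ := fun n => min 1 (L n * (t - s))
  set g : ℕ → ℝ → ℝ := fun n r => 2 * m n ^ 2 * exp (-(2 * L n * (s - r)))
  have hg_nonneg : ∀ n r, 0 ≤ g n r := fun n r => by positivity
  have hg_le : ∀ n, ∫ r in Set.Ioo 0 s, g n r ≤ min (t - s) (1 / ((n : ℝ) + 1) ^ 2) :=
      fun n => by
    have hL := neumannEigenvalue_pos n
    rw [← integral_Ioc_eq_integral_Ioo, ← intervalIntegral.integral_of_le hs,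
      intervalIntegral.integral_const_mul, integral_exp_neg_mul_sub (by positivity)]
    calc 2 * m n ^ 2 * ((1 - exp (-(2 * L n * s))) / (2 * L n))
        = m n ^ 2 * (1 - exp (-(2 * L n * s))) / L n := by field_simp
      _ ≤ m n ^ 2 / L n := div_le_div_of_nonneg_right
          (mul_le_of_le_one_right (sq_nonneg _) (by linarith [exp_pos (-(2 * L n * s))])) hL.le
      _ ≤ min (t - s) (1 / L n) := min_one_mul_sq_div_le hL (sub_nonneg.2 hst)
      _ ≤ min (t - s) (1 / ((n : ℝ) + 1) ^ 2) := min_le_min_left _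
          (one_div_le_one_div_of_le (by positivity) (sq_succ_le_neumannEigenvalue n))
  have hg_summable : Summable fun n => ∫ r in Set.Ioo 0 s, g n r :=
    (summable_min_one_div_succ_sq (sub_nonneg.2 hst)).of_nonneg_of_le
      (fun n => setIntegral_nonneg measurableSet_Ioo fun r _ => hg_nonneg n r) hg_le
  rw [intervalIntegral.integral_of_le hs, integral_Ioc_eq_integral_Ioo]
  refine (integral_le_tsum_integral_of_abs_le_tsum
    (fun n => (by fun_prop : Continuous (g n)).integrableOn_Icc.mono_set Set.Ioo_subset_Icc_self)
    hg_nonneg hg_summable ?_).trans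
    (hg_summable.tsum_le_tsum hg_le (summable_min_one_div_succ_sq (sub_nonneg.2 hst)))
  filter_upwards [ae_restrict_mem measurableSet_Ioo] with r hr
  rw [abs_of_nonneg (intervalIntegral.integral_nonneg zero_le_one fun _ _ => sq_nonneg _)]
  have h := integral_sq_neumannHeatKernel_sub_le (sub_pos.2 hr.2) (sub_le_sub_right hst r) x
  rwa [sub_sub_sub_cancel_right] at h

theorem stmt_3 :
    ∃ C > 0, ∀ s t : ℝ, 0 ≤ s → s < t → ∀ x ∈ Set.Icc (0:ℝ) 1,
      ∫ r in (0:ℝ)..s, ∫ ξ in (0:ℝ)..1,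
          (NeumannHeatKernel (t - r) x ξ - NeumannHeatKernel (s - r) x ξ) ^ 2 ≤
        C * |t - s| ^ ((1:ℝ)/2) := by
  refine ⟨3, by norm_num, fun s t hs hst x _ => ?_⟩
  rw [abs_of_pos (sub_pos.2 hst), ← sqrt_eq_rpow]
  exact (integral_integral_sq_neumannHeatKernel_sub_le hs hst.le x).trans
    (tsum_min_one_div_succ_sq_le (sub_pos.2 hst))
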